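/- arXiv:1608.07727 — 2 statements merged into one kernel-verified Lean document; each statement's English description precedes it below -/
import Mathlib

section
/- For every positive integer p, there exists q = q(p) such that every bipartite graph G = (A, B, E) with neighbourhood diversity at least q contains an induced subgraph isomorphic to one of: the induced matching M_p (p disjoint edges), the bipartite complement of M_p, or the chain graph Z_p. -/
/-- The bipartite graph on `A ⊕ B` determined by the edge relation `E : A → B → Prop`. -/
def bipGraph (A B : Type) (E : A → B → Prop) : SimpleGraph (A ⊕ B) :=
  SimpleGraph.fromRel (fun u v => ∃ a b, u = Sum.inl a ∧ v = Sum.inr b ∧ E a b)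

/-- Two vertices are similar if no third vertex is adjacent to exactly one of them. -/
def GraphSimilar {V : Type} (G : SimpleGraph V) (x y : V) : Prop :=
  ∀ z, z ≠ x → z ≠ y → (G.Adj z x ↔ G.Adj z y)

/-!
Half of `q` pairwise non-similar vertices lie on one side of the bipartite graph, and there they
have pairwise distinct neighbourhoods. Descending the binary trie of `2 ^ K` distinct neighbourhoods
gives a vertex `s`, vertices `r 0, …, r (K - 1)` and columns `c 0, …, c (K - 1)` such that `r i`
disagrees with `s` at `c i` and agrees with `s` at every earlier `c j`. So in the matrix `r i ∼ c j`
each column is constant below the diagonal, with the opposite value on the diagonal. An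
end-homogeneous subsequence followed by the pigeonhole principle makes the matrix constant on each of
the two triangles as well, and the four possible pairs of constants give `M_p`, its bipartite
complement, or `Z_p`.
-/

open Finset

def IsUnavoidablePattern (p : ℕ) (M : Fin p → Fin p → Prop) : Prop :=
  (∀ i j, M i j ↔ i = j) ∨ (∀ i j, M i j ↔ i ≠ j) ∨
    (∀ i j : Fin p, M i j ↔ p ≤ (i : ℕ) + (j : ℕ) + 1)

namespace IsUnavoidablePattern

variable {p : ℕ} {M : Fin p → Fin p → Prop}

theorem transpose (h : IsUnavoidablePattern p M) : IsUnavoidablePattern p fun i j => M j i := by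
  rcases h with h | h | h
  · exact Or.inl fun i j => (h j i).trans eq_comm
  · exact Or.inr <| Or.inl fun i j => (h j i).trans ne_comm
  · exact Or.inr <| Or.inr fun i j => (h j i).trans (by omega)

theorem injective (h : IsUnavoidablePattern p M) : Function.Injective M := by
  intro i i' hii'
  have hrow : ∀ j, M i j ↔ M i' j := fun j => by rw [hii']
  rcases h with h | h | h
  · simpa [h, eq_comm] using hrow i
  · simpa [h, eq_comm] using hrow i
  · by_contra hne
    rcases lt_or_gt_of_ne (Fin.val_ne_of_ne hne) with hlt | hlt
    · have := hrow ⟨p - 1 - i', by omega⟩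
      simp only [h] at this
      omega
    · have := hrow ⟨p - 1 - i, by omega⟩
      simp only [h] at this
      omega

theorem exists_embedding {A B : Type} {E : A → B → Prop} {x : Fin p → A} {y : Fin p → B}
    (h : IsUnavoidablePattern p fun i j => E (x i) (y j)) :
    ∃ (x' : Fin p ↪ A) (y' : Fin p ↪ B), IsUnavoidablePattern p fun i j => E (x' i) (y' j) :=
  ⟨⟨x, h.injective.of_comp (f := fun a j => E a (y j))⟩,
    ⟨y, h.transpose.injective.of_comp (f := fun b i => E (x i) b)⟩, h⟩

theorem exists_of_triangles (M : Fin (p + 1) → Fin (p + 1) → Prop)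
    (ε χ : Prop) (hlower : ∀ t u, u < t → (M t u ↔ ε)) (hdiag : ∀ t, M t t ↔ ¬ε)
    (hupper : ∀ t u, t < u → (M t u ↔ χ)) :
    ∃ x y : Fin p → Fin (p + 1), IsUnavoidablePattern p fun i j => M (x i) (y j) := by
  have hM : ∀ t u, M t u ↔ (u < t ∧ ε) ∨ (t = u ∧ ¬ε) ∨ (t < u ∧ χ) := fun t u => by
    rcases lt_trichotomy t u with h | rfl | h <;> grind
  by_cases hε : ε <;> by_cases hχ : χ
  · have key : ∀ t u, M t u ↔ t ≠ u := fun t u => by grind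
    exact ⟨Fin.castSucc, Fin.castSucc, Or.inr <| Or.inl fun i j =>
      (key _ _).trans Fin.castSucc_inj.ne⟩
  · have key : ∀ t u, M t u ↔ u < t := fun t u => by grind
    exact ⟨Fin.succ, fun j => j.rev.castSucc, Or.inr <| Or.inr fun i j =>
      (key _ _).trans <| by rw [Fin.lt_def, Fin.val_castSucc, Fin.val_succ, Fin.val_rev]; omega⟩
  · have key : ∀ t u, M t u ↔ t ≤ u := fun t u => by grind
    exact ⟨fun i => i.rev.castSucc, Fin.castSucc, Or.inr <| Or.inr fun i j =>
      (key _ _).trans <| by rw [Fin.le_def, Fin.val_castSucc, Fin.val_castSucc, Fin.val_rev]; omega⟩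
  · have key : ∀ t u, M t u ↔ t = u := fun t u => by grind
    exact ⟨Fin.castSucc, Fin.castSucc, Or.inl fun i j => (key _ _).trans Fin.castSucc_inj⟩

end IsUnavoidablePattern

section Ramsey

variable {α β ι : Type*}

theorem exists_staircase (R : α → β → Prop) (k : ℕ) (S : Finset α)
    (hS : (S : Set α).Pairwise fun x y => ∃ b, ¬(R x b ↔ R y b)) (hk : 2 ^ k ≤ #S) :
    ∃ s ∈ S, ∃ (r : Fin k → α) (c : Fin k → β), ∀ i, r i ∈ S ∧
      (R (r i) (c i) ↔ ¬R s (c i)) ∧ ∀ j < i, (R (r i) (c j) ↔ R s (c j)) := by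
  classical
  induction k generalizing S with
  | zero =>
    obtain ⟨s, hs⟩ := card_pos.1 (lt_of_lt_of_le (by simp) hk)
    exact ⟨s, hs, Fin.elim0, Fin.elim0, fun i => i.elim0⟩
  | succ k ih =>
    obtain ⟨x, hx, y, hy, hxy⟩ :=
      one_lt_card.1 (lt_of_lt_of_le (Nat.one_lt_two_pow (by simp)) hk)
    obtain ⟨b, hb⟩ := hS hx hy hxy
    obtain ⟨P, -, hP⟩ := exists_le_card_fiber_of_mul_le_card_of_maps_to (s := S) (t := univ)
      (f := fun z => R z b) (n := 2 ^ k) (fun _ _ => mem_univ _) univ_nonempty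
      (by simpa [pow_succ'] using hk)
    obtain ⟨z, hz, hzP⟩ : ∃ z ∈ S, ¬(R z b ↔ P) := by
      by_contra! hall
      exact hb ((hall x hx).trans (hall y hy).symm)
    obtain ⟨s, hs, r, c, hrc⟩ := ih _ (hS.mono (coe_subset.2 (filter_subset _ _))) hP
    rw [mem_filter] at hs
    refine ⟨s, hs.1, Fin.cons z r, Fin.cons b c, Fin.cases ?_ fun i => ?_⟩
    · simp only [Fin.cons_zero, Fin.not_lt_zero, IsEmpty.forall_iff, implies_true, and_true]
      exact ⟨hz, by rw [hs.2]; tauto⟩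
    · obtain ⟨hri, hdiag, hbelow⟩ := hrc i
      rw [mem_filter] at hri
      refine ⟨hri.1, by simpa using hdiag, Fin.cases ?_ fun j hj => ?_⟩
      · simp [hri.2, hs.2]
      · simpa using hbelow j (Fin.succ_lt_succ_iff.1 hj)

theorem exists_strictMono_endHomogeneous [LinearOrder ι] (col : ι → ι → Prop) (k : ℕ)
    (S : Finset ι) (hk : 2 ^ k ≤ #S) :
    ∃ v : Fin k → ι, StrictMono v ∧ (∀ a, v a ∈ S) ∧
      ∃ χ : Fin k → Prop, ∀ a b, a < b → (col (v a) (v b) ↔ χ a) := by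
  classical
  induction k generalizing S with
  | zero => exact ⟨Fin.elim0, fun a => a.elim0, fun a => a.elim0, Fin.elim0, fun a => a.elim0⟩
  | succ k ih =>
    have hne : S.Nonempty := card_pos.1 (lt_of_lt_of_le (by simp) hk)
    set x := S.min' hne
    obtain ⟨P, -, hP⟩ := exists_lt_card_fiber_of_mul_lt_card_of_maps_to (s := S.erase x)
      (t := univ) (f := col x) (n := 2 ^ k - 1) (fun _ _ => mem_univ _)
      (by rw [card_erase_of_mem (S.min'_mem hne), card_univ, Fintype.card_prop]
          have := Nat.one_le_two_pow (n := k); rw [pow_succ] at hk; omega)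
    obtain ⟨v, hv, hvS, χ, hχ⟩ := ih _ (Nat.le_of_pred_lt hP)
    simp only [mem_filter, mem_erase] at hvS
    have hxv : ∀ a, x < v a := fun a => lt_of_le_of_ne (S.min'_le _ (hvS a).1.2) (hvS a).1.1.symm
    refine ⟨Fin.cons x v, Fin.strictMono_cons.2 ⟨hxv, hv⟩,
      Fin.cases (S.min'_mem hne) fun a => (hvS a).1.2, Fin.cons P χ, ?_⟩
    intro a b hab
    induction b using Fin.cases with
    | zero => exact absurd hab (Fin.not_lt_zero a)
    | succ b =>
      induction a using Fin.cases with
      | zero => simpa using (hvS b).2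
      | succ a => simpa using hχ a b (Fin.succ_lt_succ_iff.1 hab)

theorem exists_strictMono_comp_eq [Fintype β] {n m : ℕ} (f : Fin n → β)
    (h : Fintype.card β * m < n) :
    ∃ (w : Fin (m + 1) → Fin n) (y : β), StrictMono w ∧ ∀ i, f (w i) = y := by
  classical
  obtain ⟨y, -, hy⟩ := exists_lt_card_fiber_of_mul_lt_card_of_maps_to (s := univ) (t := univ)
    (f := f) (fun _ _ => mem_univ _) (by simpa using h)
  exact ⟨_, y, (orderEmbOfCardLe _ hy).strictMono,
    fun i => (mem_filter.1 (orderEmbOfCardLe_mem _ hy i)).2⟩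

end Ramsey

theorem IsUnavoidablePattern.exists_of_pairwise_separated {α β : Type*} (p : ℕ)
    (R : α → β → Prop) (S : Finset α)
    (hS : (S : Set α).Pairwise fun x y => ∃ b, ¬(R x b ↔ R y b))
    (hcard : 2 ^ 2 ^ (4 * p + 1) ≤ #S) :
    ∃ (x : Fin p → α) (y : Fin p → β), IsUnavoidablePattern p fun i j => R (x i) (y j) := by
  obtain ⟨s, -, r, c, hrc⟩ := exists_staircase R _ S hS hcard
  obtain ⟨v, hv, -, χ, hχ⟩ := exists_strictMono_endHomogeneous (fun t u => R (r t) (c u))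
    (4 * p + 1) univ (by simp)
  obtain ⟨w, ⟨ε, χ₀⟩, hw, hwc⟩ := exists_strictMono_comp_eq (fun a => (R s (c (v a)), χ a))
    (m := p) (by simp)
  obtain ⟨x, y, h⟩ := IsUnavoidablePattern.exists_of_triangles
    (fun t u => R (r (v (w t))) (c (v (w u)))) ε χ₀
    (fun t u htu => ((hrc _).2.2 _ (hv (hw htu))).trans (congrArg Prod.fst (hwc u)).to_iff)
    (fun t => ((hrc _).2.1).trans (not_congr (congrArg Prod.fst (hwc t)).to_iff))
    (fun t u htu => (hχ _ _ (hw htu)).trans (congrArg Prod.snd (hwc t)).to_iff)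
  exact ⟨r ∘ v ∘ w ∘ x, c ∘ v ∘ w ∘ y, h⟩

section BipartiteGraph

variable {A B : Type} (E : A → B → Prop)

@[simp]
theorem bipGraph_adj_inl_inr (a : A) (b : B) :
    (bipGraph A B E).Adj (.inl a) (.inr b) ↔ E a b := by
  simp [bipGraph]

@[simp]
theorem bipGraph_adj_inr_inl (a : A) (b : B) :
    (bipGraph A B E).Adj (.inr b) (.inl a) ↔ E a b := by
  simp [bipGraph]

@[simp]
theorem bipGraph_adj_inl_inl (a a' : A) : ¬(bipGraph A B E).Adj (.inl a) (.inl a') := by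
  simp [bipGraph]

@[simp]
theorem bipGraph_adj_inr_inr (b b' : B) : ¬(bipGraph A B E).Adj (.inr b) (.inr b') := by
  simp [bipGraph]

theorem pairwise_separated_toLeft {S : Finset (A ⊕ B)}
    (hS : (S : Set (A ⊕ B)).Pairwise fun u v => ¬GraphSimilar (bipGraph A B E) u v) :
    (S.toLeft : Set A).Pairwise fun a a' => ∃ b, ¬(E a b ↔ E a' b) := by
  intro a ha a' ha' hne
  by_contra! h
  refine hS (mem_toLeft.1 ha) (mem_toLeft.1 ha') (Sum.inl_injective.ne hne) ?_
  rintro (a'' | b) - - <;> simp [h]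

theorem pairwise_separated_toRight {S : Finset (A ⊕ B)}
    (hS : (S : Set (A ⊕ B)).Pairwise fun u v => ¬GraphSimilar (bipGraph A B E) u v) :
    (S.toRight : Set B).Pairwise fun b b' => ∃ a, ¬(E a b ↔ E a b') := by
  intro b hb b' hb' hne
  by_contra! h
  refine hS (mem_toRight.1 hb) (mem_toRight.1 hb') (Sum.inr_injective.ne hne) ?_
  rintro (a | b'') - - <;> simp [h]

end BipartiteGraph

theorem diversity_unavoidable_bipartite_general (p : ℕ) :
    ∃ q : ℕ, ∀ (A B : Type) (E : A → B → Prop),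
      (∃ f : Fin q ↪ (A ⊕ B),
        ∀ i j, i ≠ j → ¬ GraphSimilar (bipGraph A B E) (f i) (f j)) →
      ∃ (x : Fin p ↪ A) (y : Fin p ↪ B),
        (∀ i j, E (x i) (y j) ↔ i = j) ∨
        (∀ i j, E (x i) (y j) ↔ i ≠ j) ∨
        (∀ i j : Fin p, E (x i) (y j) ↔ p ≤ (i : ℕ) + (j : ℕ) + 1) := by
  refine ⟨2 * 2 ^ 2 ^ (4 * p + 1), fun A B E ⟨f, hf⟩ => ?_⟩
  set S := univ.map f
  have hS : (S : Set (A ⊕ B)).Pairwise fun u v => ¬GraphSimilar (bipGraph A B E) u v := by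
    simpa [S, Set.Pairwise] using fun i j hij => hf i j hij
  have hcard : #S.toLeft + #S.toRight = 2 * 2 ^ 2 ^ (4 * p + 1) := by
    rw [card_toLeft_add_card_toRight, card_map, card_univ, Fintype.card_fin]
  by_cases hleft : 2 ^ 2 ^ (4 * p + 1) ≤ #S.toLeft
  · obtain ⟨x, y, h⟩ := IsUnavoidablePattern.exists_of_pairwise_separated p E _
      (pairwise_separated_toLeft E hS) hleft
    exact h.exists_embedding
  · obtain ⟨y, x, h⟩ := IsUnavoidablePattern.exists_of_pairwise_separated p (fun b a => E a b) _
      (pairwise_separated_toRight E hS) (by omega)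
    exact h.transpose.exists_embedding

/-- For every positive integer `p` there is `q` such that every bipartite graph of
neighbourhood diversity at least `q` (i.e. containing `q` pairwise non-similar vertices)
contains, as an induced sub-bipartite-graph, the matching `M_p` (`x_i` adjacent to `y_j`
iff `i = j`), its bipartite complement (`i ≠ j`), or the chain graph `Z_p`
(`x_i` adjacent to `y_j` iff `(i+1) + (j+1) ≥ p + 1`, 0-indexed). -/
theorem diversity_unavoidable_bipartite (p : ℕ) (hp : 0 < p) :
    ∃ q : ℕ, ∀ (A B : Type) (E : A → B → Prop),
      (∃ f : Fin q ↪ (A ⊕ B),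
        ∀ i j, i ≠ j → ¬ GraphSimilar (bipGraph A B E) (f i) (f j)) →
      ∃ (x : Fin p ↪ A) (y : Fin p ↪ B),
        (∀ i j, E (x i) (y j) ↔ i = j) ∨
        (∀ i j, E (x i) (y j) ↔ i ≠ j) ∨
        (∀ i j : Fin p, E (x i) (y j) ↔ p ≤ (i : ℕ) + (j : ℕ) + 1) :=
  diversity_unavoidable_bipartite_general p
end

section
/- The classes of bipartite graphs, co-bipartite graphs, and split graphs are exactly the minimal hereditary classes of graphs of unbounded VC-dimension: each of these three classes has unbounded VC-dimension, and every hereditary class with unbounded VC-dimension contains at least one of them as a subclass. -/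
/-- A set of vertices is independent if no two of its vertices are adjacent. -/
def SimpleGraph.IsIndepSet' {V : Type} (G : SimpleGraph V) (s : Set V) : Prop :=
  s.Pairwise fun a b => ¬ G.Adj a b

/-- The VC-dimension of the set system of closed neighbourhoods of `G` is at least `k`:
some set `A` of `k` vertices is shattered by closed neighbourhoods. -/
def VCDimAtLeast {V : Type} (G : SimpleGraph V) (k : ℕ) : Prop :=
  ∃ A : Finset V, A.card = k ∧
    ∀ B : Finset V, B ⊆ A → ∃ v : V, ∀ a ∈ A, (a ∈ B ↔ (a = v ∨ G.Adj v a))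

/-- `G` is bipartite: its vertices partition into at most two independent sets. -/
def IsBip {V : Type} (G : SimpleGraph V) : Prop :=
  ∃ f : V → Bool, ∀ u v, G.Adj u v → f u ≠ f v

/-- `G` is split: its vertices partition into a clique and an independent set. -/
def IsSplit {V : Type} (G : SimpleGraph V) : Prop :=
  ∃ K : Set V, G.IsClique K ∧ G.IsIndepSet' Kᶜ

/-!
The three classes all contain the graphs `shatterGraph n b₁ b₂`: `n` points and one vertex for
each subset of them, adjacent exactly to that subset, with the two sides made cliques or
independent sets according to `b₁` and `b₂`. Such a graph has VC-dimension `n`, and every graph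
on at most `n` vertices split into a `b₁`-homogeneous and a `b₂`-homogeneous part is an induced
subgraph of it.

Conversely, a huge shattered set contains a large set `A` shattered by open neighbourhoods of
vertices outside `A`, and by Ramsey's theorem `A` may be taken homogeneous. Labelling the points
of `A` suitably and applying Ramsey's theorem once more to the witnesses of a family of subsets
yields an induced `shatterGraph d b₁ b₂`. A hereditary class of unbounded VC-dimension thus
contains `shatterGraph n b₁ b₂` for fixed `b₁, b₂` and infinitely many `n`, hence every
finite graph with a homogeneous partition of that type: all bipartite graphs for
`(false, false)`, all co-bipartite ones for `(true, true)`, all split ones otherwise.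
-/

open Finset

namespace SimpleGraph

variable {V : Type} (G : SimpleGraph V)

def IsHomogeneous (s : Set V) (b : Bool) : Prop :=
  s.Pairwise fun u v => G.Adj u v ↔ b

def HasHomogeneousPartition (b₁ b₂ : Bool) : Prop :=
  ∃ s : Set V, G.IsHomogeneous s b₁ ∧ G.IsHomogeneous sᶜ b₂

def OpenShatters (A : Finset V) : Prop :=
  ∀ S ⊆ A, ∃ w ∉ A, ∀ a ∈ A, a ∈ S ↔ G.Adj w a

variable {G} {n : ℕ} {b₁ b₂ : Bool}

theorem IsClique.isHomogeneous {s : Set V} (h : G.IsClique s) : G.IsHomogeneous s true :=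
  h.imp fun _ _ huv => iff_of_true huv rfl

theorem IsIndepSet'.isHomogeneous {s : Set V} (h : G.IsIndepSet' s) : G.IsHomogeneous s false :=
  h.imp fun _ _ huv => iff_of_false huv Bool.false_ne_true

theorem HasHomogeneousPartition.symm (h : G.HasHomogeneousPartition b₁ b₂) :
    G.HasHomogeneousPartition b₂ b₁ := by
  obtain ⟨s, hs, hsc⟩ := h
  exact ⟨sᶜ, hsc, by rwa [compl_compl]⟩

theorem hasHomogeneousPartition_of_isBip (h : IsBip G) : G.HasHomogeneousPartition false false := by
  obtain ⟨f, hf⟩ := h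
  have hfibre : ∀ b, G.IsHomogeneous {v | f v = b} false := fun b u hu v hv _ =>
    iff_of_false (fun huv => hf u v huv (hu.trans hv.symm)) Bool.false_ne_true
  refine ⟨{v | f v = false}, hfibre false, ?_⟩
  simpa only [Set.compl_ofPred, Bool.not_eq_false] using hfibre true

theorem hasHomogeneousPartition_of_isBip_compl (h : IsBip Gᶜ) :
    G.HasHomogeneousPartition true true := by
  obtain ⟨f, hf⟩ := h
  have hfibre : ∀ b, G.IsHomogeneous {v | f v = b} true := fun b u hu v hv huv =>
    iff_of_true (not_not.1 fun hnadj => hf u v ⟨huv, hnadj⟩ (hu.trans hv.symm)) rfl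
  refine ⟨{v | f v = false}, hfibre false, ?_⟩
  simpa only [Set.compl_ofPred, Bool.not_eq_false] using hfibre true

theorem hasHomogeneousPartition_of_isSplit (h : IsSplit G) :
    G.HasHomogeneousPartition false true := by
  obtain ⟨K, hK, hKc⟩ := h
  exact ⟨Kᶜ, hKc.isHomogeneous, by simpa only [compl_compl] using hK.isHomogeneous⟩

def shatterGraph (n : ℕ) (b₁ b₂ : Bool) : SimpleGraph (Fin n ⊕ Finset (Fin n)) where
  Adj
    | .inl i, .inl j => i ≠ j ∧ b₁
    | .inr S, .inr T => S ≠ T ∧ b₂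
    | .inl i, .inr T | .inr T, .inl i => i ∈ T
  symm := ⟨by
    rintro (i | S) (j | T) h
    exacts [⟨h.1.symm, h.2⟩, h, h, ⟨h.1.symm, h.2⟩]⟩
  loopless := ⟨by rintro (i | S) ⟨h, -⟩ <;> exact h rfl⟩

@[simp] theorem shatterGraph_adj_inl_inl {i j : Fin n} :
    (shatterGraph n b₁ b₂).Adj (.inl i) (.inl j) ↔ i ≠ j ∧ b₁ := Iff.rfl

@[simp] theorem shatterGraph_adj_inr_inr {S T : Finset (Fin n)} :
    (shatterGraph n b₁ b₂).Adj (.inr S) (.inr T) ↔ S ≠ T ∧ b₂ := Iff.rfl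

@[simp] theorem shatterGraph_adj_inl_inr {i : Fin n} {T : Finset (Fin n)} :
    (shatterGraph n b₁ b₂).Adj (.inl i) (.inr T) ↔ i ∈ T := Iff.rfl

@[simp] theorem shatterGraph_adj_inr_inl {i : Fin n} {T : Finset (Fin n)} :
    (shatterGraph n b₁ b₂).Adj (.inr T) (.inl i) ↔ i ∈ T := Iff.rfl

theorem vcDimAtLeast_shatterGraph (n : ℕ) (b₁ b₂ : Bool) :
    VCDimAtLeast (shatterGraph n b₁ b₂) n := by
  classical
  refine ⟨univ.map .inl, by simp, fun B _ => ⟨.inr (univ.filter (.inl · ∈ B)), ?_⟩⟩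
  simp

theorem isBip_shatterGraph (n : ℕ) : IsBip (shatterGraph n false false) :=
  ⟨Sum.isRight, by rintro (i | S) (j | T) h <;> simp_all⟩

theorem isBip_compl_shatterGraph (n : ℕ) : IsBip (shatterGraph n true true)ᶜ :=
  ⟨Sum.isRight, by rintro (i | S) (j | T) ⟨hne, h⟩ <;> simp_all⟩

theorem isSplit_shatterGraph (n : ℕ) : IsSplit (shatterGraph n false true) := by
  refine ⟨Set.range .inr, ?_, ?_⟩
  · rintro _ ⟨S, rfl⟩ _ ⟨T, rfl⟩ h
    simpa using h
  · rintro (i | S) hx (j | T) hy - <;> simp_all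

theorem HasHomogeneousPartition.nonempty_embedding (h : G.HasHomogeneousPartition b₁ b₂)
    (e : V ↪ Fin n) : Nonempty (G ↪g shatterGraph n b₁ b₂) := by
  classical
  obtain ⟨s, hs, hsc⟩ := h
  -- `e v` itself is included to make the codes distinct
  let code (v : V) : Finset (Fin n) :=
    univ.filter fun i => ∃ u, e u = i ∧ (u = v ∨ u ∈ s ∧ G.Adj v u)
  have mem_code (u v : V) : e u ∈ code v ↔ u = v ∨ u ∈ s ∧ G.Adj v u := by
    simp [code, e.injective.eq_iff]
  have code_inj : Set.InjOn code sᶜ := fun u hu v _ huv =>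
    ((mem_code u v).1 (huv ▸ (mem_code u u).2 (.inl rfl))).resolve_right fun h => hu h.1
  let φ (v : V) : Fin n ⊕ Finset (Fin n) := if v ∈ s then .inl (e v) else .inr (code v)
  have hφ : Function.Injective φ := fun u v huv => by
    by_cases hu : u ∈ s <;> by_cases hv : v ∈ s <;> simp_all [φ, code_inj.eq_iff]
  refine ⟨⟨⟨φ, hφ⟩, fun {u v} => ?_⟩⟩
  by_cases huv : u = v
  · subst huv; simp
  by_cases hu : u ∈ s <;> by_cases hv : v ∈ s
  · simp [φ, hu, hv, huv, hs hu hv huv]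
  · simp [φ, hu, hv, mem_code, huv, G.adj_comm]
  · simp [φ, hu, hv, mem_code, Ne.symm huv]
  · simp [φ, hu, hv, code_inj.eq_iff hu hv, huv, hsc hu hv huv]

theorem nonempty_shatterGraph_embedding {a : Fin n → V} {w : Finset (Fin n) → V}
    (haw : ∀ j T, a j ≠ w T) (hadj : ∀ j T, G.Adj (w T) (a j) ↔ j ∈ T)
    (ha : Pairwise fun i j => G.Adj (a i) (a j) ↔ b₁)
    (hw : Pairwise fun S T => G.Adj (w S) (w T) ↔ b₂) :
    Nonempty (shatterGraph n b₁ b₂ ↪g G) := by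
  have ha_inj : Function.Injective a := fun i j hij => by
    have := hadj j {i}
    rw [← hij, hadj] at this
    simpa [eq_comm] using this
  have hw_inj : Function.Injective w := fun S T hST => by
    ext j
    rw [← hadj, ← hadj, hST]
  refine ⟨⟨⟨Sum.elim a w, ha_inj.sumElim hw_inj haw⟩, ?_⟩⟩
  rintro (i | S) (j | T) <;> simp only [Function.Embedding.coeFn_mk, Sum.elim_inl, Sum.elim_inr]
  · by_cases hij : i = j
    · simp [hij]
    · simp [hij, ha hij]
  · rw [G.adj_comm, hadj, shatterGraph_adj_inl_inr]
  · simp [hadj]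
  · by_cases hST : S = T
    · simp [hST]
    · simp [hST, hw hST]

theorem exists_isNClique_or_isNClique_compl (a b : ℕ) :
    ∃ N, ∀ {V : Type} (G : SimpleGraph V) (s : Finset V), N ≤ #s →
      (∃ t ⊆ s, G.IsNClique a t) ∨ ∃ t ⊆ s, Gᶜ.IsNClique b t := by
  classical
  induction a generalizing b with
  | zero => exact ⟨0, fun G s _ => .inl ⟨∅, empty_subset s, by simp⟩⟩
  | succ a iha =>
    induction b with
    | zero => exact ⟨0, fun G s _ => .inr ⟨∅, empty_subset s, by simp⟩⟩
    | succ b ihb =>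
      obtain ⟨N₁, hN₁⟩ := iha (b + 1)
      obtain ⟨N₂, hN₂⟩ := ihb
      refine ⟨N₁ + N₂ + 1, fun {V} G s hs => ?_⟩
      obtain ⟨x, hx⟩ : s.Nonempty := card_pos.1 (by omega)
      have hsplit : #s ≤ #(s.filter (G.Adj x)) + #(s.filter (Gᶜ.Adj x)) + 1 := by
        refine (card_le_card fun y hy => ?_).trans
          ((card_insert_le x _).trans (Nat.add_le_add_right (card_union_le _ _) 1))
        by_cases hxy : x = y
        · simp [hxy]
        · by_cases hadj : G.Adj x y <;> simp [hy, hadj, hxy]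
      have hext {H : SimpleGraph V} [DecidableRel H.Adj] {m : ℕ} {t : Finset V}
          (ht : t ⊆ s.filter (H.Adj x)) (hH : H.IsNClique m t) :
          insert x t ⊆ s ∧ H.IsNClique (m + 1) (insert x t) :=
        ⟨insert_subset hx (ht.trans (filter_subset _ _)),
          hH.insert fun y hy => (mem_filter.1 (ht hy)).2⟩
      by_cases h₁ : N₁ ≤ #(s.filter (G.Adj x))
      · rcases hN₁ G _ h₁ with ⟨t, hts, ht⟩ | ⟨t, hts, ht⟩
        · exact .inl ⟨_, hext hts ht⟩
        · exact .inr ⟨t, hts.trans (filter_subset _ _), ht⟩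
      · rcases hN₂ G (s.filter (Gᶜ.Adj x)) (by omega) with ⟨t, hts, ht⟩ | ⟨t, hts, ht⟩
        · exact .inl ⟨t, hts.trans (filter_subset _ _), ht⟩
        · exact .inr ⟨_, hext hts ht⟩

theorem exists_isHomogeneous (q : ℕ) :
    ∃ N, ∀ {V : Type} (G : SimpleGraph V) (s : Finset V), N ≤ #s →
      ∃ t ⊆ s, #t = q ∧ ∃ b, G.IsHomogeneous t b := by
  obtain ⟨N, hN⟩ := exists_isNClique_or_isNClique_compl q q
  refine ⟨N, fun G s hs => ?_⟩
  rcases hN G s hs with ⟨t, hts, ht⟩ | ⟨t, hts, ht⟩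
  · exact ⟨t, hts, ht.card_eq, true, ht.isClique.isHomogeneous⟩
  · refine ⟨t, hts, ht.card_eq, false, ht.isClique.imp fun u v huv => ?_⟩
    exact iff_of_false ((compl_adj G u v).1 huv).2 Bool.false_ne_true

theorem OpenShatters.mono {A B : Finset V} (h : G.OpenShatters A) (hBA : B ⊆ A) :
    G.OpenShatters B := fun S hS => by
  obtain ⟨w, hwA, hw⟩ := h S (hS.trans hBA)
  exact ⟨w, fun hwB => hwA (hBA hwB), fun a ha => hw a (hBA ha)⟩

/-- Padding a subset `S` of `A` by the subsets of the `k` remaining shattered points gives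
`2 ^ k` distinct witnesses, too many to all lie in the shattered set; one outside it sees
exactly `S` in `A`. -/
theorem _root_.VCDimAtLeast.exists_openShatters {m k : ℕ} (h : VCDimAtLeast G (m + k))
    (hk : m + k < 2 ^ k) : ∃ A : Finset V, #A = m ∧ G.OpenShatters A := by
  classical
  obtain ⟨A₀, hA₀, hshat⟩ := h
  obtain ⟨A, hAA₀, hA⟩ := exists_subset_card_eq (show m ≤ #A₀ by omega)
  set D := A₀ \ A
  refine ⟨A, hA, fun S hS => ?_⟩
  by_contra hS_open
  have hSY (Y : Finset V) : S ∪ Y ∩ D ⊆ A₀ :=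
    union_subset (hS.trans hAA₀) (inter_subset_right.trans sdiff_subset)
  choose w hw using fun Y => hshat (S ∪ Y ∩ D) (hSY Y)
  have hwA₀ (Y : Finset V) : w Y ∈ A₀ := by
    by_contra hY
    refine hS_open ⟨w Y, fun h => hY (hAA₀ h), fun a ha => ?_⟩
    have haD : a ∉ D := fun h => (mem_sdiff.1 h).2 ha
    have haw : a ≠ w Y := fun h => hY (h ▸ hAA₀ ha)
    simpa [haD, haw] using hw Y a (hAA₀ ha)
  have hw_trace (Y : Finset V) :
      S ∪ Y ∩ D = A₀.filter fun a => a = w Y ∨ G.Adj (w Y) a := by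
    ext a
    by_cases ha : a ∈ A₀
    · simp [ha, ← hw Y a ha]
    · simp only [mem_filter, ha, false_and, iff_false]
      exact fun h => ha (hSY Y h)
  have hD (Y : Finset V) (hY : Y ⊆ D) : (S ∪ Y ∩ D) ∩ D = Y := by
    ext a
    have hSD : a ∈ S → a ∉ D := fun haS haD => (mem_sdiff.1 haD).2 (hS haS)
    have := @hY a
    simp only [mem_inter, mem_union]
    tauto
  have hw_inj : Set.InjOn w D.powerset := fun Y hY Y' hY' hYY' => by
    rw [← hD Y (mem_powerset.1 hY), ← hD Y' (mem_powerset.1 hY'), hw_trace, hw_trace, hYY']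
  have := card_le_card_of_injOn w (fun Y _ => hwA₀ Y) hw_inj
  rw [card_powerset, card_sdiff_of_subset hAA₀, hA₀, hA, Nat.add_sub_cancel_left] at this
  omega

theorem exists_shatterGraph_embedding_of_openShatters (d : ℕ) :
    ∃ M, ∀ {V : Type} (G : SimpleGraph V) (A : Finset V) (b₁ : Bool), G.OpenShatters A →
      G.IsHomogeneous A b₁ → M ≤ #A →
        ∃ b₂, Nonempty (shatterGraph d b₁ b₂ ↪g G) := by
  classical
  obtain ⟨L, hL⟩ := exists_isHomogeneous (2 ^ d)
  let I := (Finset (Fin d) → Fin L) × Fin d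
  refine ⟨Fintype.card I, fun {V} G A b₁ hA hhom hM => ?_⟩
  obtain ⟨ι⟩ : Nonempty (I ↪ A) := Function.Embedding.nonempty_of_card_le (by simpa using hM)
  -- Witness `v` sees the point labelled `(ρ, j)` iff `v = ρ T` for some `T ∋ j`, so every
  -- injective `ρ` into a Ramsey-homogeneous set of witnesses shatters the points `(ρ, ·)`.
  let S (v : Fin L) : Finset V :=
    (univ.filter fun c : I => ∃ T, c.1 T = v ∧ c.2 ∈ T).map (ι.trans (.subtype _))
  choose W hWA hW using fun v => hA (S v) fun x hx => by
    obtain ⟨c, -, rfl⟩ := mem_map.1 hx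
    exact (ι c).2
  obtain ⟨U, -, hU, b₂, hUhom⟩ := hL (G.comap W) univ (by simp)
  obtain ⟨ρ⟩ : Nonempty (Finset (Fin d) ↪ U) :=
    Function.Embedding.nonempty_of_card_le (by simp [hU])
  let ρ' : Finset (Fin d) → Fin L := fun T => ρ T
  have hρ' : Function.Injective ρ' := Subtype.val_injective.comp ρ.injective
  refine ⟨b₂, nonempty_shatterGraph_embedding
    (a := fun j => ι (ρ', j)) (w := fun T => W (ρ' T))
    (fun j T h => hWA (ρ' T) (h ▸ (ι _).2)) (fun j T => ?_) (fun i j hij => ?_)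
    (fun S T hST => hUhom (ρ S).2 (ρ T).2 (hρ'.ne hST))⟩
  · rw [← hW _ _ (ι _).2]
    simp [S, hρ'.eq_iff]
  · exact hhom (ι _).2 (ι _).2 fun h => hij (congrArg Prod.snd (ι.injective (Subtype.ext h)))

theorem exists_shatterGraph_embedding_of_vcDimAtLeast (d : ℕ) :
    ∃ K, ∀ {V : Type} (G : SimpleGraph V), VCDimAtLeast G K →
      ∃ b₁ b₂, Nonempty (shatterGraph d b₁ b₂ ↪g G) := by
  obtain ⟨M, hM⟩ := exists_shatterGraph_embedding_of_openShatters d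
  obtain ⟨R, hR⟩ := exists_isHomogeneous M
  have hR₂ : R + (R + 1) < 2 ^ (R + 1) := by
    have := Nat.lt_two_pow_self (n := R)
    rw [pow_succ]
    omega
  refine ⟨R + (R + 1), fun G hG => ?_⟩
  obtain ⟨A, hA, hA_open⟩ := hG.exists_openShatters hR₂
  obtain ⟨B, hBA, hB, b₁, hB_hom⟩ := hR G A hA.ge
  obtain ⟨b₂, h⟩ := hM G B b₁ (hA_open.mono hBA) hB_hom hB.ge
  exact ⟨b₁, b₂, h⟩

def IsHereditary (C : ∀ V : Type, SimpleGraph V → Prop) : Prop :=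
  ∀ (V W : Type) (G : SimpleGraph V) (H : SimpleGraph W), C V G → (H ↪g G) → C W H

theorem IsHereditary.exists_forall_hasHomogeneousPartition
    {C : ∀ V : Type, SimpleGraph V → Prop} (hC : IsHereditary C)
    (hC_vc : ∀ k, ∃ (V : Type) (G : SimpleGraph V), C V G ∧ VCDimAtLeast G k) :
    ∃ b₁ b₂, ∀ (V : Type) [Fintype V] (G : SimpleGraph V),
      G.HasHomogeneousPartition b₁ b₂ → C V G := by
  have (n : ℕ) : ∃ b : Bool × Bool, C _ (shatterGraph n b.1 b.2) := by
    obtain ⟨K, hK⟩ := exists_shatterGraph_embedding_of_vcDimAtLeast n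
    obtain ⟨V, G, hCG, hG⟩ := hC_vc K
    obtain ⟨b₁, b₂, ⟨f⟩⟩ := hK G hG
    exact ⟨(b₁, b₂), hC _ _ _ _ hCG f⟩
  choose b hb using this
  obtain ⟨⟨b₁, b₂⟩, hb_inf⟩ := Finite.exists_infinite_fiber b
  refine ⟨b₁, b₂, fun V _ G hG => ?_⟩
  obtain ⟨n, hn, hVn⟩ := (Set.infinite_coe_iff.1 hb_inf).exists_gt (Fintype.card V)
  obtain ⟨e⟩ : Nonempty (V ↪ Fin n) :=
    Function.Embedding.nonempty_of_card_le (by simpa using hVn.le)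
  obtain ⟨f⟩ := hG.nonempty_embedding e
  have hCn := hb n
  rw [show b n = (b₁, b₂) from hn] at hCn
  exact hC _ _ _ _ hCn f

end SimpleGraph

open SimpleGraph

/-- The classes of bipartite, co-bipartite and split graphs are the minimal hereditary
classes of unbounded VC-dimension: each has unbounded VC-dimension, and every hereditary
class of unbounded VC-dimension contains one of them as a subclass. -/
theorem minimal_classes_vc_dimension :
    ((∀ k : ℕ, ∃ (V : Type) (_ : Fintype V) (G : SimpleGraph V),
        IsBip G ∧ VCDimAtLeast G k) ∧
     (∀ k : ℕ, ∃ (V : Type) (_ : Fintype V) (G : SimpleGraph V),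
        IsBip Gᶜ ∧ VCDimAtLeast G k) ∧
     (∀ k : ℕ, ∃ (V : Type) (_ : Fintype V) (G : SimpleGraph V),
        IsSplit G ∧ VCDimAtLeast G k)) ∧
    (∀ C : ∀ V : Type, SimpleGraph V → Prop,
      (∀ (V W : Type) (G : SimpleGraph V) (H : SimpleGraph W),
        C V G → (H ↪g G) → C W H) →
      (∀ k : ℕ, ∃ (V : Type) (G : SimpleGraph V), C V G ∧ VCDimAtLeast G k) →
      ((∀ (V : Type), Fintype V → ∀ G : SimpleGraph V, IsBip G → C V G) ∨
       (∀ (V : Type), Fintype V → ∀ G : SimpleGraph V, IsBip Gᶜ → C V G) ∨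
       (∀ (V : Type), Fintype V → ∀ G : SimpleGraph V, IsSplit G → C V G))) := by
  refine ⟨⟨fun k => ?_, fun k => ?_, fun k => ?_⟩, fun C hC hC_vc => ?_⟩
  · exact ⟨_, inferInstance, _, isBip_shatterGraph k, vcDimAtLeast_shatterGraph k _ _⟩
  · exact ⟨_, inferInstance, _, isBip_compl_shatterGraph k, vcDimAtLeast_shatterGraph k _ _⟩
  · exact ⟨_, inferInstance, _, isSplit_shatterGraph k, vcDimAtLeast_shatterGraph k _ _⟩
  obtain ⟨b₁, b₂, hC_part⟩ := IsHereditary.exists_forall_hasHomogeneousPartition hC hC_vc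
  cases b₁ <;> cases b₂
  · exact .inl fun V _ G hG => hC_part V G (hasHomogeneousPartition_of_isBip hG)
  · exact .inr (.inr fun V _ G hG => hC_part V G (hasHomogeneousPartition_of_isSplit hG))
  · exact .inr (.inr fun V _ G hG => hC_part V G (hasHomogeneousPartition_of_isSplit hG).symm)
  · exact .inr (.inl fun V _ G hG => hC_part V G (hasHomogeneousPartition_of_isBip_compl hG))
end
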